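/- arXiv:2401.16826 — 4 statements merged into one kernel-verified Lean document; each statement's English description precedes it below -/
import Mathlib

section
/- For fixed positive powers P₁, P₂, positive σ², correlation 0 < ρ < 1, and channel vectors h₁, h₂ with h₁^H h₂ ≠ 0, the phase difference φ_d = arg(h₁^H h₂)/π (i.e., the φ_d maximizing Re(e^{-iπφ_d} h₁^H h₂)) minimizes the two-user sum-MSE ξ(φ_d) = σ²(2σ² + (1-ρ²)(P₁‖h₁‖² + P₂‖h₂‖²)) / (σ⁴ + σ² υ(φ_d) + ω) over all real φ_d, where υ(φ_d) = P₁‖h₁‖² + P₂‖h₂‖² + 2ρ√(P₁P₂) Re(e^{-iπφ_d} h₁^H h₂) and ω = P₁P₂(1-ρ²)(‖h₁‖²‖h₂‖² - |h₁^H h₂|²). -/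
/-!
Writing `ip = h₁ᴴ h₂`, the phase enters `ξ` only through `Re (e^{-iθ} ip)` in the denominator,
with coefficient `2ρ√(P₁P₂) σ² ≥ 0`. This real part is at most `‖ip‖`, with equality at
`θ = arg ip`, so the denominator is largest there. It is positive for every phase: by
Cauchy–Schwarz and AM–GM, `2ρ√(P₁P₂)‖ip‖ ≤ P₁‖h₁‖² + P₂‖h₂‖²` and `ω ≥ 0`. Since the numerator is
nonnegative, `ξ` is smallest where the denominator is largest.
-/

open Complex ComplexConjugate

theorem Complex.norm_sum_conj_mul_sq_le {ι : Type*} (s : Finset ι) (a b : ι → ℂ) :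
    ‖∑ i ∈ s, conj (a i) * b i‖ ^ 2 ≤ (∑ i ∈ s, normSq (a i)) * ∑ i ∈ s, normSq (b i) := by
  have hnorm : ‖∑ i ∈ s, conj (a i) * b i‖ ≤ ∑ i ∈ s, ‖a i‖ * ‖b i‖ :=
    (norm_sum_le _ _).trans_eq (by simp)
  calc ‖∑ i ∈ s, conj (a i) * b i‖ ^ 2
      ≤ (∑ i ∈ s, ‖a i‖ * ‖b i‖) ^ 2 := by gcongr
    _ ≤ (∑ i ∈ s, ‖a i‖ ^ 2) * ∑ i ∈ s, ‖b i‖ ^ 2 := Finset.sum_mul_sq_le_sq_mul_sq _ _ _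
    _ = _ := by simp only [Complex.sq_norm]

theorem Complex.abs_re_exp_neg_mul_I_mul_le_norm (θ : ℝ) (z : ℂ) :
    |(exp (-θ * I) * z).re| ≤ ‖z‖ := by
  refine (abs_re_le_norm _).trans_eq ?_
  rw [norm_mul, ← ofReal_neg, norm_exp_ofReal_mul_I, one_mul]

theorem Complex.exp_neg_arg_mul_I_mul_self (z : ℂ) : exp (-arg z * I) * z = ‖z‖ := by
  calc exp (-arg z * I) * z = exp (-arg z * I) * (‖z‖ * exp (arg z * I)) := by
        rw [norm_mul_exp_arg_mul_I]
    _ = ‖z‖ := by rw [mul_left_comm, ← exp_add, neg_mul, neg_add_cancel, exp_zero, mul_one]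

theorem Real.two_mul_sqrt_mul_mul_le_add {P₁ P₂ n₁ n₂ c : ℝ} (hP₁ : 0 ≤ P₁) (hP₂ : 0 ≤ P₂)
    (hn₁ : 0 ≤ n₁) (hn₂ : 0 ≤ n₂) (hc : c ^ 2 ≤ n₁ * n₂) :
    2 * √(P₁ * P₂) * c ≤ P₁ * n₁ + P₂ * n₂ := by
  refine le_of_abs_le (abs_le_of_sq_le_sq ?_ (by positivity))
  calc (2 * √(P₁ * P₂) * c) ^ 2 = 4 * (P₁ * P₂) * c ^ 2 := by
        rw [mul_pow, mul_pow, Real.sq_sqrt (by positivity)]; ring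
    _ ≤ 4 * (P₁ * P₂) * (n₁ * n₂) := by gcongr
    _ ≤ (P₁ * n₁ + P₂ * n₂) ^ 2 := by nlinarith [sq_nonneg (P₁ * n₁ - P₂ * n₂)]

theorem stmt_2_general {NR : ℕ} (h₁ h₂ : Fin NR → ℂ) (ρ σ2 P₁ P₂ : ℝ)
    (hρ : 0 < ρ) (hρ1 : ρ < 1) (hσ : 0 < σ2) (hP₁ : 0 < P₁) (hP₂ : 0 < P₂)
    (ip : ℂ) (hip : ip = ∑ i, (starRingEnd ℂ) (h₁ i) * h₂ i) :
    let n₁ : ℝ := ∑ i, Complex.normSq (h₁ i)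
    let n₂ : ℝ := ∑ i, Complex.normSq (h₂ i)
    let υ : ℝ → ℝ := fun φd => P₁ * n₁ + P₂ * n₂ +
      2 * ρ * Real.sqrt (P₁ * P₂) *
        (Complex.exp (-(Real.pi * φd : ℝ) * Complex.I) * ip).re
    let ω : ℝ := P₁ * P₂ * (1 - ρ ^ 2) * (n₁ * n₂ - ‖ip‖ ^ 2)
    let ξ : ℝ → ℝ := fun φd =>
      σ2 * (2 * σ2 + (1 - ρ ^ 2) * (P₁ * n₁ + P₂ * n₂)) /
        (σ2 ^ 2 + σ2 * υ φd + ω)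
    ∀ φd : ℝ, ξ (Complex.arg ip / Real.pi) ≤ ξ φd := by
  intro n₁ n₂ υ ω ξ φd
  have hn₁ : 0 ≤ n₁ := Finset.sum_nonneg fun i _ => normSq_nonneg _
  have hn₂ : 0 ≤ n₂ := Finset.sum_nonneg fun i _ => normSq_nonneg _
  have hcs : ‖ip‖ ^ 2 ≤ n₁ * n₂ := hip ▸ norm_sum_conj_mul_sq_le _ h₁ h₂
  have hρ2 : 0 ≤ 1 - ρ ^ 2 := by nlinarith
  have hcross : 2 * ρ * √(P₁ * P₂) * ‖ip‖ ≤ P₁ * n₁ + P₂ * n₂ := calc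
    _ = ρ * (2 * √(P₁ * P₂) * ‖ip‖) := by ring
    _ ≤ 2 * √(P₁ * P₂) * ‖ip‖ := mul_le_of_le_one_left (by positivity) hρ1.le
    _ ≤ P₁ * n₁ + P₂ * n₂ := Real.two_mul_sqrt_mul_mul_le_add hP₁.le hP₂.le hn₁ hn₂ hcs
  obtain ⟨hre_ge, hre_le⟩ := abs_le.mp (abs_re_exp_neg_mul_I_mul_le_norm (Real.pi * φd) ip)
  have hre_opt : (exp (-(Real.pi * (arg ip / Real.pi) : ℝ) * I) * ip).re = ‖ip‖ := by
    rw [mul_div_cancel₀ _ Real.pi_ne_zero, exp_neg_arg_mul_I_mul_self, ofReal_re]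
  have hυ_le : υ φd ≤ υ (arg ip / Real.pi) := by
    simp only [υ, hre_opt]; gcongr
  have hυ_nonneg : 0 ≤ υ φd := by
    have := mul_le_mul_of_nonneg_left hre_ge (by positivity : 0 ≤ 2 * ρ * √(P₁ * P₂))
    simp only [υ]; linarith
  have hω : 0 ≤ ω := mul_nonneg (by positivity) (sub_nonneg.mpr hcs)
  exact div_le_div_of_nonneg_left (by positivity) (by positivity) (by gcongr)

theorem stmt_2 {NR : ℕ} (h₁ h₂ : Fin NR → ℂ) (ρ σ2 P₁ P₂ : ℝ)
    (hρ : 0 < ρ) (hρ1 : ρ < 1) (hσ : 0 < σ2) (hP₁ : 0 < P₁) (hP₂ : 0 < P₂)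
    (ip : ℂ) (hip : ip = ∑ i, (starRingEnd ℂ) (h₁ i) * h₂ i) (hne : ip ≠ 0) :
    let n₁ : ℝ := ∑ i, Complex.normSq (h₁ i)
    let n₂ : ℝ := ∑ i, Complex.normSq (h₂ i)
    let υ : ℝ → ℝ := fun φd => P₁ * n₁ + P₂ * n₂ +
      2 * ρ * Real.sqrt (P₁ * P₂) *
        (Complex.exp (-(Real.pi * φd : ℝ) * Complex.I) * ip).re
    let ω : ℝ := P₁ * P₂ * (1 - ρ ^ 2) * (n₁ * n₂ - ‖ip‖ ^ 2)
    let ξ : ℝ → ℝ := fun φd =>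
      σ2 * (2 * σ2 + (1 - ρ ^ 2) * (P₁ * n₁ + P₂ * n₂)) /
        (σ2 ^ 2 + σ2 * υ φd + ω)
    ∀ φd : ℝ, ξ (Complex.arg ip / Real.pi) ≤ ξ φd :=
  stmt_2_general h₁ h₂ ρ σ2 P₁ P₂ hρ hρ1 hσ hP₁ hP₂ ip hip
end

section
/- In the two-user SIMO MAC with uncorrelated sources (ρ = 0), the sum-MSE ξ(P₁,P₂) = σ²(2σ² + P₁‖h₁‖² + P₂‖h₂‖²)/(σ⁴ + σ²(P₁‖h₁‖² + P₂‖h₂‖²) + P₁P₂(‖h₁‖²‖h₂‖² - |h₁^H h₂|²)) is strictly decreasing in P₁ (for P₁ > 0), assuming h₁ ≠ 0 and σ² > 0; hence under constraints P₁ ≤ T₁, P₂ ≤ T₂ the minimum is attained at P₁ = T₁, P₂ = T₂. -/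
/-!
As a function of `P₁` alone, the sum-MSE is a Möbius map `x ↦ (a + b x) / (c + d x)`, which is
strictly decreasing on the half-line where its denominator is positive as soon as `b c < a d`.
Here `a d - b c = σ² (σ⁴ ‖h₁‖² + 2 σ² P₂ D + P₂² ‖h₂‖² D)` with
`D = ‖h₁‖²‖h₂‖² - |h₁ᴴ h₂|² ≥ 0` by Cauchy–Schwarz, which is positive because `h₁ ≠ 0`.
The same computation with the users swapped shows that the sum-MSE is antitone in `P₂`,
so on the box `(0, T₁] × (0, T₂]` it is smallest at the corner `(T₁, T₂)`.
-/

open Set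

theorem strictAntiOn_div_affine {a b c d : ℝ} (hc : 0 < c) (hd : 0 ≤ d) (h : b * c < a * d) :
    StrictAntiOn (fun x => (a + b * x) / (c + d * x)) (Ici 0) := by
  intro x (hx : 0 ≤ x) x' (hx' : 0 ≤ x') hxx'
  have hden : 0 < c + d * x := by positivity
  have hden' : 0 < c + d * x' := by positivity
  rw [div_lt_div_iff₀ hden' hden]
  nlinarith [mul_pos (sub_pos.2 hxx') (sub_pos.2 h)]

theorem antitoneOn_div_affine {a b c d : ℝ} (hc : 0 < c) (hd : 0 ≤ d) (h : b * c ≤ a * d) :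
    AntitoneOn (fun x => (a + b * x) / (c + d * x)) (Ici 0) := by
  intro x (hx : 0 ≤ x) x' (hx' : 0 ≤ x') hxx'
  have hden : 0 < c + d * x := by positivity
  have hden' : 0 < c + d * x' := by positivity
  rw [div_le_div_iff₀ hden' hden]
  nlinarith [mul_nonneg (sub_nonneg.2 hxx') (sub_nonneg.2 h)]

/-- The sum-MSE of the two-user SIMO MAC with `n₁ = ‖h₁‖²`, `n₂ = ‖h₂‖²` and
`D = ‖h₁‖²‖h₂‖² - |h₁ᴴ h₂|²`. -/
noncomputable def sumMSE (σ2 n₁ n₂ D P₁ P₂ : ℝ) : ℝ :=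
  σ2 * (2 * σ2 + P₁ * n₁ + P₂ * n₂) / (σ2 ^ 2 + σ2 * (P₁ * n₁ + P₂ * n₂) + P₁ * P₂ * D)

namespace sumMSE

variable {σ2 n₁ n₂ D P₂ : ℝ}

theorem comm (σ2 n₁ n₂ D P₁ P₂ : ℝ) : sumMSE σ2 n₁ n₂ D P₁ P₂ = sumMSE σ2 n₂ n₁ D P₂ P₁ := by
  unfold sumMSE
  ring_nf

theorem eq_div_affine (σ2 n₁ n₂ D P₂ : ℝ) :
    (fun P₁ => sumMSE σ2 n₁ n₂ D P₁ P₂) = fun P₁ =>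
      (σ2 * (2 * σ2 + P₂ * n₂) + σ2 * n₁ * P₁) /
        (σ2 * (σ2 + P₂ * n₂) + (σ2 * n₁ + P₂ * D) * P₁) := by
  funext P₁
  unfold sumMSE
  congr 1 <;> ring

theorem det_eq (σ2 n₁ n₂ D P₂ : ℝ) :
    σ2 * (2 * σ2 + P₂ * n₂) * (σ2 * n₁ + P₂ * D) - σ2 * n₁ * (σ2 * (σ2 + P₂ * n₂)) =
      σ2 * (σ2 ^ 2 * n₁ + 2 * σ2 * P₂ * D + P₂ ^ 2 * n₂ * D) := by
  ring

theorem strictAntiOn_left (hσ : 0 < σ2) (hn₁ : 0 < n₁) (hn₂ : 0 ≤ n₂) (hD : 0 ≤ D)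
    (hP₂ : 0 ≤ P₂) : StrictAntiOn (fun P₁ => sumMSE σ2 n₁ n₂ D P₁ P₂) (Ici 0) := by
  rw [eq_div_affine]
  refine strictAntiOn_div_affine (by positivity) (by positivity) (sub_pos.1 ?_)
  rw [det_eq]
  positivity

theorem antitoneOn_left (hσ : 0 < σ2) (hn₁ : 0 ≤ n₁) (hn₂ : 0 ≤ n₂) (hD : 0 ≤ D)
    (hP₂ : 0 ≤ P₂) : AntitoneOn (fun P₁ => sumMSE σ2 n₁ n₂ D P₁ P₂) (Ici 0) := by
  rw [eq_div_affine]
  refine antitoneOn_div_affine (by positivity) (by positivity) (sub_nonneg.1 ?_)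
  rw [det_eq]
  positivity

theorem antitoneOn_right {P₁ : ℝ} (hσ : 0 < σ2) (hn₁ : 0 ≤ n₁) (hn₂ : 0 ≤ n₂) (hD : 0 ≤ D)
    (hP₁ : 0 ≤ P₁) : AntitoneOn (fun P₂ => sumMSE σ2 n₁ n₂ D P₁ P₂) (Ici 0) := by
  simpa only [comm σ2 n₁] using antitoneOn_left hσ hn₂ hn₁ hD hP₁

end sumMSE

theorem sum_normSq_eq_norm_toLp_sq {ι : Type*} [Fintype ι] (u : ι → ℂ) :
    ∑ i, Complex.normSq (u i) = ‖WithLp.toLp 2 u‖ ^ 2 := by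
  simp only [EuclideanSpace.norm_sq_eq, Complex.normSq_eq_norm_sq]

theorem norm_sum_conj_mul_sq_le {ι : Type*} [Fintype ι] (u v : ι → ℂ) :
    ‖∑ i, starRingEnd ℂ (u i) * v i‖ ^ 2 ≤
      (∑ i, Complex.normSq (u i)) * ∑ i, Complex.normSq (v i) := by
  have hinner : ∑ i, starRingEnd ℂ (u i) * v i =
      inner ℂ (WithLp.toLp 2 u : EuclideanSpace ℂ ι) (WithLp.toLp 2 v) := by
    simp [PiLp.inner_apply, mul_comm]
  rw [hinner, sum_normSq_eq_norm_toLp_sq, sum_normSq_eq_norm_toLp_sq, ← mul_pow]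
  gcongr
  exact norm_inner_le_norm _ _

theorem stmt_4_general {NR : ℕ} (h₁ h₂ : Fin NR → ℂ) (σ2 T₁ T₂ : ℝ)
    (hσ : 0 < σ2) (hh₁ : h₁ ≠ 0) :
    let n₁ : ℝ := ∑ i, Complex.normSq (h₁ i)
    let n₂ : ℝ := ∑ i, Complex.normSq (h₂ i)
    let ip : ℂ := ∑ i, (starRingEnd ℂ) (h₁ i) * h₂ i
    let ξ : ℝ → ℝ → ℝ := fun P₁ P₂ =>
      σ2 * (2 * σ2 + P₁ * n₁ + P₂ * n₂) /
        (σ2 ^ 2 + σ2 * (P₁ * n₁ + P₂ * n₂) +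
          P₁ * P₂ * (n₁ * n₂ - ‖ip‖ ^ 2))
    (∀ P₂ > 0, ∀ P₁ P₁' : ℝ, 0 < P₁ → P₁ < P₁' → ξ P₁' P₂ < ξ P₁ P₂) ∧
      (∀ P₁ P₂ : ℝ, 0 < P₁ → P₁ ≤ T₁ → 0 < P₂ → P₂ ≤ T₂ → ξ T₁ T₂ ≤ ξ P₁ P₂) := by
  intro n₁ n₂ ip ξ
  have hn₁ : 0 < n₁ := by
    rw [show n₁ = _ from sum_normSq_eq_norm_toLp_sq h₁]
    exact pow_pos (norm_pos_iff.2 ((WithLp.toLp_eq_zero 2).not.2 hh₁)) 2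
  have hn₂ : 0 ≤ n₂ := Finset.sum_nonneg fun i _ => Complex.normSq_nonneg (h₂ i)
  have hD : 0 ≤ n₁ * n₂ - ‖ip‖ ^ 2 := sub_nonneg.2 (norm_sum_conj_mul_sq_le h₁ h₂)
  refine ⟨fun P₂ hP₂ P₁ P₁' hP₁ hP₁' =>
    sumMSE.strictAntiOn_left hσ hn₁ hn₂ hD hP₂.le (mem_Ici.2 hP₁.le)
      (mem_Ici.2 (hP₁.trans hP₁').le) hP₁', ?_⟩
  intro P₁ P₂ hP₁ hP₁T hP₂ hP₂T
  calc ξ T₁ T₂ ≤ ξ P₁ T₂ :=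
        sumMSE.antitoneOn_left hσ hn₁.le hn₂ hD (hP₂.trans_le hP₂T).le (mem_Ici.2 hP₁.le)
          (mem_Ici.2 (hP₁.le.trans hP₁T)) hP₁T
    _ ≤ ξ P₁ P₂ :=
        sumMSE.antitoneOn_right hσ hn₁.le hn₂ hD hP₁.le (mem_Ici.2 hP₂.le)
          (mem_Ici.2 (hP₂.le.trans hP₂T)) hP₂T

theorem stmt_4 {NR : ℕ} (h₁ h₂ : Fin NR → ℂ) (σ2 T₁ T₂ : ℝ)
    (hσ : 0 < σ2) (hh₁ : h₁ ≠ 0) (hh₂ : h₂ ≠ 0) (hT₁ : 0 < T₁) (hT₂ : 0 < T₂) :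
    let n₁ : ℝ := ∑ i, Complex.normSq (h₁ i)
    let n₂ : ℝ := ∑ i, Complex.normSq (h₂ i)
    let ip : ℂ := ∑ i, (starRingEnd ℂ) (h₁ i) * h₂ i
    let ξ : ℝ → ℝ → ℝ := fun P₁ P₂ =>
      σ2 * (2 * σ2 + P₁ * n₁ + P₂ * n₂) /
        (σ2 ^ 2 + σ2 * (P₁ * n₁ + P₂ * n₂) +
          P₁ * P₂ * (n₁ * n₂ - ‖ip‖ ^ 2))
    (∀ P₂ > 0, ∀ P₁ P₁' : ℝ, 0 < P₁ → P₁ < P₁' → ξ P₁' P₂ < ξ P₁ P₂) ∧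
      (∀ P₁ P₂ : ℝ, 0 < P₁ → P₁ ≤ T₁ → 0 < P₂ → P₂ ≤ T₂ → ξ T₁ T₂ ≤ ξ P₁ P₂) :=
  stmt_4_general h₁ h₂ σ2 T₁ T₂ hσ hh₁
end

section
/- With α₁(P₁,P₂) = A + B(‖h₁‖²P₁ - ‖h₂‖²P₂)√(P₂/P₁) - 2σ⁴ρ|h₁^H h₂|√(P₂/P₁), where A < 0 and B = σ²ρ(1-ρ²)|h₁^H h₂| ≥ 0, a necessary condition for α₁(P₁,P₂) > 0 is ‖h₁‖²P₁ > ‖h₂‖²P₂. Consequently, defining α₂ by swapping (P₁,h₁) with (P₂,h₂), there exist no powers P₁, P₂ > 0 with α₁(P₁,P₂) > 0 and α₂(P₁,P₂) > 0 simultaneously. -/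
/-! With `B ≥ 0`, the term `-2σ⁴ρ|h₁ᴴh₂|√(P₂/P₁)` of `α₁` is never positive and the term
`B(‖h₁‖²P₁ - ‖h₂‖²P₂)√(P₂/P₁)` is positive only if `‖h₁‖²P₁ > ‖h₂‖²P₂`; since `A < 0`, `α₁ > 0`
forces that inequality. Symmetrically `α₂ > 0` forces the reverse one. -/

lemma pos_of_add_mul_mul_sub_mul_pos {A B C s x : ℝ} (hA : A < 0) (hB : 0 ≤ B) (hC : 0 ≤ C)
    (hs : 0 ≤ s) (h : 0 < A + B * x * s - C * s) : 0 < x := by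
  by_contra! hx
  have hBxs : B * x * s ≤ 0 := mul_nonpos_of_nonpos_of_nonneg (mul_nonpos_of_nonneg_of_nonpos hB hx) hs
  nlinarith [mul_nonneg hC hs]

theorem stmt_7 {NR : ℕ} (h₁ h₂ : Fin NR → ℂ) (ρ σ2 : ℝ)
    (hσ : 0 < σ2) (hρ : 0 < ρ) (hρ1 : ρ < 1) :
    let n₁ : ℝ := ∑ i, Complex.normSq (h₁ i)
    let n₂ : ℝ := ∑ i, Complex.normSq (h₂ i)
    let ip : ℝ := ‖∑ i, (starRingEnd ℂ) (h₁ i) * h₂ i‖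
    let B : ℝ := σ2 * ρ * (1 - ρ ^ 2) * ip
    ∀ A A' : ℝ, A < 0 → A' < 0 →
      let α₁ : ℝ → ℝ → ℝ := fun P₁ P₂ =>
        A + B * (n₁ * P₁ - n₂ * P₂) * Real.sqrt (P₂ / P₁)
          - 2 * σ2 ^ 2 * ρ * ip * Real.sqrt (P₂ / P₁)
      let α₂ : ℝ → ℝ → ℝ := fun P₁ P₂ =>
        A' + B * (n₂ * P₂ - n₁ * P₁) * Real.sqrt (P₁ / P₂)
          - 2 * σ2 ^ 2 * ρ * ip * Real.sqrt (P₁ / P₂)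
      (∀ P₁ P₂ : ℝ, 0 < P₁ → 0 < P₂ → 0 < α₁ P₁ P₂ → n₂ * P₂ < n₁ * P₁) ∧
        ¬ ∃ P₁ P₂ : ℝ, 0 < P₁ ∧ 0 < P₂ ∧ 0 < α₁ P₁ P₂ ∧ 0 < α₂ P₁ P₂ := by
  intro n₁ n₂ ip B A A' hA hA' α₁ α₂
  have hip : 0 ≤ ip := norm_nonneg _
  have hB : 0 ≤ B := by
    have : 0 ≤ 1 - ρ ^ 2 := by nlinarith
    positivity
  have hC : 0 ≤ 2 * σ2 ^ 2 * ρ * ip := by positivity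
  have hα₁ (P₁ P₂ : ℝ) (h : 0 < α₁ P₁ P₂) : n₂ * P₂ < n₁ * P₁ :=
    sub_pos.mp (pos_of_add_mul_mul_sub_mul_pos hA hB hC (Real.sqrt_nonneg _) h)
  have hα₂ (P₁ P₂ : ℝ) (h : 0 < α₂ P₁ P₂) : n₁ * P₁ < n₂ * P₂ :=
    sub_pos.mp (pos_of_add_mul_mul_sub_mul_pos hA' hB hC (Real.sqrt_nonneg _) h)
  refine ⟨fun P₁ P₂ _ _ => hα₁ P₁ P₂, ?_⟩
  rintro ⟨P₁, P₂, -, -, h₁pos, h₂pos⟩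
  exact lt_asymm (hα₁ P₁ P₂ h₁pos) (hα₂ P₁ P₂ h₂pos)
end

section
/- For block-diagonal Hermitian matrices A = blockdiag(Ā, 0), B = blockdiag(B̄, σ²) with σ² > 0, and D_k = blockdiag(e_k e_k^T, -T_k), if Z° = [[Z̄, v],[v^H, w]] is PSD, satisfies tr(B Z°) = 1, tr(D_k Z°) ≤ 0 for all k, maximizes tr(A Z°), and Z̄ = u u^H has rank one, then Z⁺ = [[u u^H, u√w],[√w u^H, w]] is PSD, satisfies the same constraints with the same objective value tr(A Z⁺) = tr(A Z°), and is hence also optimal. -/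
open Matrix ComplexOrder

/-! The data matrices are block diagonal, so every trace in the problem sees only the diagonal
blocks `uuᴴ` and `w`, which `Z⁺` shares with `Z°`. And `Z⁺ = xxᴴ` for `x = (u, √w)`, hence
positive semidefinite, `w ≥ 0` being a diagonal entry of `Z°`. -/

namespace Matrix

variable {l m R : Type*} [Fintype l] [Fintype m]

lemma trace_fromBlocks [AddCommMonoid R] (A : Matrix m m R) (B : Matrix m l R)
    (C : Matrix l m R) (D : Matrix l l R) :
    (fromBlocks A B C D).trace = A.trace + D.trace := by
  simp [trace, Fintype.sum_sum_type]

lemma trace_fromBlocks_zero_zero_mul [NonUnitalNonAssocSemiring R] (M₁ : Matrix m m R)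
    (M₂ : Matrix l l R) (Z₁₁ : Matrix m m R) (Z₁₂ : Matrix m l R) (Z₂₁ : Matrix l m R)
    (Z₂₂ : Matrix l l R) :
    (fromBlocks M₁ 0 0 M₂ * fromBlocks Z₁₁ Z₁₂ Z₂₁ Z₂₂).trace =
      (M₁ * Z₁₁).trace + (M₂ * Z₂₂).trace := by
  simp [fromBlocks_multiply, trace_fromBlocks]

end Matrix

theorem stmt_8_general {n K : ℕ} (Abar Bbar : Matrix (Fin n) (Fin n) ℂ)
    (σ2 : ℝ) (T : Fin K → ℝ)
    (e : Fin K → Fin n)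
    (A B : Matrix (Fin n ⊕ Fin 1) (Fin n ⊕ Fin 1) ℂ)
    (D : Fin K → Matrix (Fin n ⊕ Fin 1) (Fin n ⊕ Fin 1) ℂ)
    (hA : A = Matrix.fromBlocks Abar 0 0 0)
    (hB : B = Matrix.fromBlocks Bbar 0 0 ((σ2 : ℂ) • 1))
    (hD : ∀ k, D k = Matrix.fromBlocks (Matrix.single (e k) (e k) 1) 0 0
      ((-(T k) : ℂ) • 1))
    (Zbar : Matrix (Fin n) (Fin n) ℂ) (v : Fin n → ℂ) (w : ℝ) (u : Fin n → ℂ)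
    (hZbar : Zbar = Matrix.vecMulVec u (star u))
    (Zo : Matrix (Fin n ⊕ Fin 1) (Fin n ⊕ Fin 1) ℂ)
    (hZo : Zo = Matrix.fromBlocks Zbar (Matrix.of fun i (_ : Fin 1) => v i)
      (Matrix.of fun (_ : Fin 1) j => star (v j)) ((w : ℂ) • 1))
    (hPSD : Zo.PosSemidef)
    (hBtr : (B * Zo).trace = 1)
    (hDtr : ∀ k, ((D k * Zo).trace).re ≤ 0)
    (hopt : ∀ Z' : Matrix (Fin n ⊕ Fin 1) (Fin n ⊕ Fin 1) ℂ,
      Z'.PosSemidef → (B * Z').trace = 1 → (∀ k, ((D k * Z').trace).re ≤ 0) →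
      ((A * Z').trace).re ≤ ((A * Zo).trace).re) :
    let Zp : Matrix (Fin n ⊕ Fin 1) (Fin n ⊕ Fin 1) ℂ :=
      Matrix.fromBlocks (Matrix.vecMulVec u (star u))
        (Matrix.of fun i (_ : Fin 1) => (Real.sqrt w : ℂ) * u i)
        (Matrix.of fun (_ : Fin 1) j => (Real.sqrt w : ℂ) * star (u j)) ((w : ℂ) • 1)
    Zp.PosSemidef ∧ (B * Zp).trace = 1 ∧ (∀ k, ((D k * Zp).trace).re ≤ 0) ∧
      (A * Zp).trace = (A * Zo).trace ∧
      (∀ Z' : Matrix (Fin n ⊕ Fin 1) (Fin n ⊕ Fin 1) ℂ,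
        Z'.PosSemidef → (B * Z').trace = 1 → (∀ k, ((D k * Z').trace).re ≤ 0) →
        ((A * Z').trace).re ≤ ((A * Zp).trace).re) := by
  intro Zp
  have hw : 0 ≤ w := by
    simpa [hZo] using hPSD.diag_nonneg (i := Sum.inr 0)
  have hZp : Zp = vecMulVec (Sum.elim u fun _ => (√w : ℂ))
      (star (Sum.elim u fun _ => (√w : ℂ))) := by
    ext (i | i) (j | j) <;>
      simp only [Zp, fromBlocks_apply₁₁, fromBlocks_apply₁₂, fromBlocks_apply₂₁,
        fromBlocks_apply₂₂, of_apply, Matrix.smul_apply, Complex.coe_smul, Complex.real_smul,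
        vecMulVec_apply, Pi.star_apply, Sum.elim_inl, Sum.elim_inr, RCLike.star_def,
        Complex.conj_ofReal, mul_comm]
    rw [Subsingleton.elim i j, one_apply_eq, mul_one, ← Complex.ofReal_mul,
      Real.mul_self_sqrt hw]
  have trace_eq (M₁ : Matrix (Fin n) (Fin n) ℂ) (M₂ : Matrix (Fin 1) (Fin 1) ℂ) :
      (fromBlocks M₁ 0 0 M₂ * Zp).trace = (fromBlocks M₁ 0 0 M₂ * Zo).trace := by
    simp only [Zp, hZo, hZbar, trace_fromBlocks_zero_zero_mul]
  have hAeq : (A * Zp).trace = (A * Zo).trace := by rw [hA]; exact trace_eq _ _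
  refine ⟨hZp ▸ posSemidef_vecMulVec_self_star _, ?_, fun k => ?_, hAeq, fun Z' h₁ h₂ h₃ => ?_⟩
  · rw [hB, trace_eq, ← hB, hBtr]
  · rw [hD k, trace_eq, ← hD k]; exact hDtr k
  · rw [hAeq]; exact hopt Z' h₁ h₂ h₃

theorem stmt_8 {n K : ℕ} (Abar Bbar : Matrix (Fin n) (Fin n) ℂ)
    (σ2 : ℝ) (hσ : 0 < σ2) (T : Fin K → ℝ) (hT : ∀ k, 0 < T k)
    (e : Fin K → Fin n)
    (A B : Matrix (Fin n ⊕ Fin 1) (Fin n ⊕ Fin 1) ℂ)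
    (D : Fin K → Matrix (Fin n ⊕ Fin 1) (Fin n ⊕ Fin 1) ℂ)
    (hA : A = Matrix.fromBlocks Abar 0 0 0)
    (hB : B = Matrix.fromBlocks Bbar 0 0 ((σ2 : ℂ) • 1))
    (hD : ∀ k, D k = Matrix.fromBlocks (Matrix.single (e k) (e k) 1) 0 0
      ((-(T k) : ℂ) • 1))
    (Zbar : Matrix (Fin n) (Fin n) ℂ) (v : Fin n → ℂ) (w : ℝ) (u : Fin n → ℂ)
    (hZbar : Zbar = Matrix.vecMulVec u (star u))
    (Zo : Matrix (Fin n ⊕ Fin 1) (Fin n ⊕ Fin 1) ℂ)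
    (hZo : Zo = Matrix.fromBlocks Zbar (Matrix.of fun i (_ : Fin 1) => v i)
      (Matrix.of fun (_ : Fin 1) j => star (v j)) ((w : ℂ) • 1))
    (hPSD : Zo.PosSemidef)
    (hBtr : (B * Zo).trace = 1)
    (hDtr : ∀ k, ((D k * Zo).trace).re ≤ 0)
    (hopt : ∀ Z' : Matrix (Fin n ⊕ Fin 1) (Fin n ⊕ Fin 1) ℂ,
      Z'.PosSemidef → (B * Z').trace = 1 → (∀ k, ((D k * Z').trace).re ≤ 0) →
      ((A * Z').trace).re ≤ ((A * Zo).trace).re) :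
    let Zp : Matrix (Fin n ⊕ Fin 1) (Fin n ⊕ Fin 1) ℂ :=
      Matrix.fromBlocks (Matrix.vecMulVec u (star u))
        (Matrix.of fun i (_ : Fin 1) => (Real.sqrt w : ℂ) * u i)
        (Matrix.of fun (_ : Fin 1) j => (Real.sqrt w : ℂ) * star (u j)) ((w : ℂ) • 1)
    Zp.PosSemidef ∧ (B * Zp).trace = 1 ∧ (∀ k, ((D k * Zp).trace).re ≤ 0) ∧
      (A * Zp).trace = (A * Zo).trace ∧
      (∀ Z' : Matrix (Fin n ⊕ Fin 1) (Fin n ⊕ Fin 1) ℂ,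
        Z'.PosSemidef → (B * Z').trace = 1 → (∀ k, ((D k * Z').trace).re ≤ 0) →
        ((A * Z').trace).re ≤ ((A * Zp).trace).re) :=
  stmt_8_general Abar Bbar σ2 T e A B D hA hB hD Zbar v w u hZbar Zo hZo hPSD hBtr hDtr hopt
end
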